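/- With strongly admissible data (σ(A) ⊂ ℂ₊, i ∉ σ(A)) and the limits κ_R = lim R_k⁻¹, κ_Q = lim Q_k⁻¹ existing, the transfer matrix functions converge: lim_{k→∞} w_A(k, -1/z) = diag(χ₁(z), χ₂(z)), where χ₁(z) = I_{m₁} - i z ϑ₁* κ_R (I + zA)⁻¹ ϑ₁ and χ₂(z) = I_{m₂} + i z ϑ₂* κ_Q (I + zA)⁻¹ ϑ₂. -/

import Mathlib

/-!
Write `B = 1 + i A⁻¹`, `C = 1 - i A⁻¹` and `G = B⁻¹ C`, so that `P k = [Bᵏ θ₁, Cᵏ θ₂]` and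
`Cᵏ = Bᵏ Gᵏ`. The resolvent `M = (A + 1/z)⁻¹ = z (1 + z A)⁻¹` commutes with `B` and `C`, hence
the diagonal blocks of `w_A(k, -1/z)` are `1 - i θ₁ᴴ R_k⁻¹ M θ₁` and `1 + i θ₂ᴴ Q_k⁻¹ M θ₂`, where
`R_k⁻¹ = (Bᵏ)ᴴ S_k⁻¹ Bᵏ` and `Q_k⁻¹ = (Cᵏ)ᴴ S_k⁻¹ Cᵏ`, while the off-diagonal blocks carry a
factor `Gᵏ` or `(Gᵏ)ᴴ`. The Cayley transform `μ ↦ (μ - i)/(μ + i)` maps the upper half-plane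
into the unit disc and `G = (A + i)⁻¹ (A - i)`, so `σ(G)` lies in the open unit disc and
`Gᵏ → 0` by Gelfand's formula. Thus the off-diagonal blocks vanish in the limit and the diagonal
ones tend to `χ₁(z)` and `χ₂(z)`.
-/

open Matrix Complex Filter Topology
open scoped ComplexOrder

theorem Complex.norm_lt_one_of_im_pos_cayley {w : ℂ} (h : 0 < (I * (1 + w) / (1 - w)).im) :
    ‖w‖ < 1 := by
  have him : (I * (1 + w) / (1 - w)).im = (1 - normSq w) / normSq (1 - w) := by
    rw [mul_div_assoc, I_mul_im, div_re, normSq_apply w]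
    simp only [add_re, sub_re, one_re, add_im, sub_im, one_im]
    ring
  rw [him, div_pos_iff] at h
  have hnormSq : normSq w < 1 := by
    rcases h with ⟨h, -⟩ | ⟨-, h⟩
    · linarith
    · exact absurd h (normSq_nonneg _).not_gt
  rw [normSq_eq_norm_sq] at hnormSq
  exact (pow_lt_one_iff_of_nonneg (norm_nonneg w) two_ne_zero).1 hnormSq

theorem tendsto_pow_atTop_nhds_zero_of_spectralRadius_lt_one {𝒜 : Type*} [NormedRing 𝒜]
    [NormedAlgebra ℂ 𝒜] [CompleteSpace 𝒜] {a : 𝒜} (ha : spectralRadius ℂ a < 1) :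
    Tendsto (a ^ ·) atTop (𝓝 0) := by
  obtain ⟨c, hρc, hc1⟩ := exists_between ha
  have hc_top : c ≠ ⊤ := (hc1.trans ENNReal.one_lt_top).ne
  have hc : c.toReal < 1 := by
    simpa using (ENNReal.toReal_lt_toReal hc_top ENNReal.one_ne_top).2 hc1
  have hbound : ∀ᶠ k : ℕ in atTop, ‖a ^ k‖ ≤ c.toReal ^ k := by
    filter_upwards [(spectrum.pow_norm_pow_one_div_tendsto_nhds_spectralRadius a
      ).eventually_lt_const hρc, eventually_ne_atTop 0] with k hk hk0
    rw [ENNReal.ofReal_lt_iff_lt_toReal (by positivity) hc_top, one_div] at hk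
    calc ‖a ^ k‖ = (‖a ^ k‖ ^ (k⁻¹ : ℝ)) ^ k :=
          (Real.rpow_inv_natCast_pow (norm_nonneg _) hk0).symm
      _ ≤ c.toReal ^ k := by gcongr
  exact squeeze_zero_norm' hbound (tendsto_pow_atTop_nhds_zero_of_lt_one ENNReal.toReal_nonneg hc)

theorem Commute.matrix_inv_left {n α : Type*} [Fintype n] [DecidableEq n] [CommRing α]
    {A B : Matrix n n α} (h : Commute A B) : Commute A⁻¹ B := by
  by_cases hA : IsUnit A
  · obtain ⟨u, rfl⟩ := hA
    rw [← Matrix.coe_units_inv]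
    exact h.units_inv_left
  · rw [Matrix.nonsing_inv_eq_ringInverse, Ring.inverse_non_unit _ hA]
    exact Commute.zero_left B

namespace Matrix

theorem commute_inv_sub_smul_one_inv {n α : Type*} [Fintype n] [DecidableEq n] [CommRing α]
    (A : Matrix n n α) (c : α) :
    Commute (A - c • 1)⁻¹ A⁻¹ :=
  ((Commute.refl A).sub_right ((Commute.one_right A).smul_right c)).matrix_inv_left.symm
    |>.matrix_inv_left

section Blocks

variable {ι m₁ m₂ n α : Type*} [Fintype n] [CommRing α] [StarRing α]

theorem conjTranspose_mul_mul_mul_of_commute {B M : Matrix n n α} (hMB : Commute M B)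
    (X : Matrix n m₁ α) (T : Matrix n n α) (Y : Matrix n m₂ α) :
    (B * X)ᴴ * (T * M) * (B * Y) = Xᴴ * (Bᴴ * T * B) * M * Y := by
  simp only [conjTranspose_mul, Matrix.mul_assoc]
  rw [← Matrix.mul_assoc M B Y, hMB.eq, Matrix.mul_assoc]

variable [DecidableEq m₁] [DecidableEq m₂]

theorem tendsto_fromBlocks_of_tendsto [TopologicalSpace α] [IsTopologicalRing α]
    [ContinuousStar α] {l : Filter ι} {X Y G : ι → Matrix n n α} {X₀ Y₀ : Matrix n n α}
    (hX : Tendsto X l (𝓝 X₀)) (hY : Tendsto Y l (𝓝 Y₀)) (hG : Tendsto G l (𝓝 0))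
    (c : α) (θ₁ : Matrix n m₁ α) (θ₂ : Matrix n m₂ α) (M : Matrix n n α) :
    Tendsto (fun k => fromBlocks (1 - c • (θ₁ᴴ * X k * M * θ₁))
        (-(c • (θ₁ᴴ * X k * M * (G k * θ₂)))) (c • (θ₂ᴴ * (G k)ᴴ * X k * M * θ₁))
        (1 + c • (θ₂ᴴ * Y k * M * θ₂))) l
      (𝓝 (fromBlocks (1 - c • (θ₁ᴴ * X₀ * M * θ₁)) 0 0 (1 + c • (θ₂ᴴ * Y₀ * M * θ₂)))) := by
  have hcont : Continuous fun p : Matrix n n α × Matrix n n α × Matrix n n α =>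
      fromBlocks (1 - c • (θ₁ᴴ * p.1 * M * θ₁)) (-(c • (θ₁ᴴ * p.1 * M * (p.2.2 * θ₂))))
        (c • (θ₂ᴴ * p.2.2ᴴ * p.1 * M * θ₁)) (1 + c • (θ₂ᴴ * p.2.1 * M * θ₂)) := by
    fun_prop
  simpa [Function.comp_def] using
    (hcont.tendsto (X₀, Y₀, 0)).comp (hX.prodMk_nhds (hY.prodMk_nhds hG))

variable [Fintype m₁] [Fintype m₂]

theorem one_sub_smul_fromBlocks_mul_conjTranspose_fromCols (c : α) (X : Matrix n m₁ α)
    (Y : Matrix n m₂ α) (T : Matrix n n α) :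
    1 - c • ((fromBlocks 1 0 0 (-1) : Matrix (m₁ ⊕ m₂) (m₁ ⊕ m₂) α) * (fromCols X Y)ᴴ * T *
        fromCols X Y) =
      fromBlocks (1 - c • (Xᴴ * T * X)) (-(c • (Xᴴ * T * Y)))
        (c • (Yᴴ * T * X)) (1 + c • (Yᴴ * T * Y)) := by
  rw [conjTranspose_fromCols_eq_fromRows_conjTranspose, fromBlocks_mul_fromRows, fromRows_mul,
    fromRows_mul_fromCols, ← fromBlocks_one, fromBlocks_smul, sub_eq_add_neg, fromBlocks_neg,
    fromBlocks_add]
  simp [sub_eq_add_neg]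

variable [DecidableEq n]

theorem one_sub_smul_fromBlocks_mul_conjTranspose_fromCols_of_commute {B C M : Matrix n n α}
    (hB : IsUnit B) (hMB : Commute M B) (hMC : Commute M C) (c : α) (θ₁ : Matrix n m₁ α)
    (θ₂ : Matrix n m₂ α) (T : Matrix n n α) :
    1 - c • ((fromBlocks 1 0 0 (-1) : Matrix (m₁ ⊕ m₂) (m₁ ⊕ m₂) α) *
        (fromCols (B * θ₁) (C * θ₂))ᴴ * T * M * fromCols (B * θ₁) (C * θ₂)) =
      fromBlocks (1 - c • (θ₁ᴴ * (Bᴴ * T * B) * M * θ₁))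
        (-(c • (θ₁ᴴ * (Bᴴ * T * B) * M * (B⁻¹ * C * θ₂))))
        (c • (θ₂ᴴ * (B⁻¹ * C)ᴴ * (Bᴴ * T * B) * M * θ₁))
        (1 + c • (θ₂ᴴ * (Cᴴ * T * C) * M * θ₂)) := by
  have hC : C * θ₂ = B * (B⁻¹ * C * θ₂) := by
    rw [← Matrix.mul_assoc, ← Matrix.mul_assoc, mul_nonsing_inv _ ((isUnit_iff_isUnit_det B).1 hB),
      Matrix.one_mul]
  have h₁₂ : (B * θ₁)ᴴ * (T * M) * (C * θ₂) = θ₁ᴴ * (Bᴴ * T * B) * M * (B⁻¹ * C * θ₂) := by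
    rw [hC, conjTranspose_mul_mul_mul_of_commute hMB]
  have h₂₁ : (C * θ₂)ᴴ * (T * M) * (B * θ₁) = θ₂ᴴ * (B⁻¹ * C)ᴴ * (Bᴴ * T * B) * M * θ₁ := by
    rw [hC, conjTranspose_mul_mul_mul_of_commute hMB, conjTranspose_mul]
  rw [Matrix.mul_assoc _ T M, one_sub_smul_fromBlocks_mul_conjTranspose_fromCols,
    conjTranspose_mul_mul_mul_of_commute hMB, conjTranspose_mul_mul_mul_of_commute hMC, h₁₂, h₂₁]

theorem inv_inv_mul_mul_conjTranspose_inv {B : Matrix n n α} (hB : IsUnit B) (S : Matrix n n α) :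
    (B⁻¹ * S * Bᴴ⁻¹)⁻¹ = Bᴴ * S⁻¹ * B := by
  have hBH : IsUnit Bᴴ.det := by
    rw [det_conjTranspose]
    exact ((isUnit_iff_isUnit_det B).1 hB).star
  rw [mul_inv_rev, mul_inv_rev, nonsing_inv_nonsing_inv _ hBH,
    nonsing_inv_nonsing_inv _ ((isUnit_iff_isUnit_det B).1 hB), Matrix.mul_assoc]

end Blocks

variable {n : Type*} [Fintype n] [DecidableEq n]

theorem conjTranspose_one_add_I_smul_inv (A : Matrix n n ℂ) : (1 + I • A⁻¹)ᴴ = 1 - I • Aᴴ⁻¹ := by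
  simp [conjTranspose_nonsing_inv, sub_eq_add_neg]

theorem conjTranspose_one_sub_I_smul_inv (A : Matrix n n ℂ) : (1 - I • A⁻¹)ᴴ = 1 + I • Aᴴ⁻¹ := by
  simp [conjTranspose_nonsing_inv, sub_eq_add_neg]

theorem inv_smul_of_ne_zero {𝕜 : Type*} [Field 𝕜] (A : Matrix n n 𝕜) {c : 𝕜} (hc : c ≠ 0) :
    (c • A)⁻¹ = c⁻¹ • A⁻¹ := by
  by_cases hA : IsUnit A.det
  · exact inv_smul' A (Units.mk0 c hc) hA
  · have hcA : ¬IsUnit (c • A).det := by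
      rwa [det_smul, IsUnit.mul_iff, and_iff_right ((IsUnit.mk0 c hc).pow _)]
    rw [nonsing_inv_apply_not_isUnit _ hA, nonsing_inv_apply_not_isUnit _ hcA, smul_zero]

theorem inv_sub_neg_one_div_smul_one (A : Matrix n n ℂ) {z : ℂ} (hz : z ≠ 0) :
    (A - (-1 / z) • 1)⁻¹ = z • (1 + z • A)⁻¹ := by
  have : A - (-1 / z) • 1 = z⁻¹ • (1 + z • A) := by
    rw [smul_add, smul_smul, inv_mul_cancel₀ hz, one_smul, neg_div, one_div, neg_smul,
      sub_neg_eq_add, add_comm]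
  rw [this, inv_smul_of_ne_zero _ (inv_ne_zero hz), inv_inv]

theorem tendsto_pow_atTop_nhds_zero_of_forall_norm_lt_one {G : Matrix n n ℂ}
    (hG : ∀ w ∈ spectrum ℂ G, ‖w‖ < 1) : Tendsto (G ^ ·) atTop (𝓝 0) := by
  rcases isEmpty_or_nonempty n with hn | hn
  · exact tendsto_const_nhds.congr fun k => Subsingleton.elim _ _
  let := Matrix.linftyOpNormedRing (n := n) (α := ℂ)
  let := Matrix.linftyOpNormedAlgebra (n := n) (R := ℂ) (α := ℂ)
  have : CompleteSpace (Matrix n n ℂ) := FiniteDimensional.complete ℂ _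
  exact tendsto_pow_atTop_nhds_zero_of_spectralRadius_lt_one <| by
    simpa using spectrum.spectralRadius_lt_of_forall_lt G (r := 1)
      fun w hw => by simpa [← NNReal.coe_lt_coe] using hG w hw

section UpperHalfPlaneSpectrum

variable {A : Matrix n n ℂ}

theorem isUnit_of_forall_mem_spectrum_im_pos (hσ : ∀ μ ∈ spectrum ℂ A, 0 < μ.im) : IsUnit A :=
  (spectrum.zero_notMem_iff ℂ).1 fun h => (hσ 0 h).false

theorem isUnit_one_sub_smul_inv (hA : IsUnit A) {c : ℂ} (hc : c ∉ spectrum ℂ A) :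
    IsUnit (1 - c • A⁻¹) := by
  have hfactor : 1 - c • A⁻¹ = A⁻¹ * -(c • 1 - A) := by
    rw [mul_neg, mul_sub, Matrix.mul_smul, mul_one,
      nonsing_inv_mul _ ((isUnit_iff_isUnit_det A).1 hA)]
    abel
  rw [spectrum.notMem_iff, Algebra.algebraMap_eq_smul_one] at hc
  rw [hfactor]
  exact (isUnit_nonsing_inv_iff.2 hA).mul hc.neg

theorem isUnit_one_add_I_smul_inv (hσ : ∀ μ ∈ spectrum ℂ A, 0 < μ.im) :
    IsUnit (1 + I • A⁻¹) := by
  have hI : -I ∉ spectrum ℂ A := fun h => absurd (hσ _ h) (by simp)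
  simpa [sub_eq_add_neg] using isUnit_one_sub_smul_inv (isUnit_of_forall_mem_spectrum_im_pos hσ) hI

theorem mem_spectrum_of_mem_spectrum_cayley (hA : IsUnit A) (hB : IsUnit (1 + I • A⁻¹)) {w : ℂ}
    (hw : w ∈ spectrum ℂ ((1 + I • A⁻¹)⁻¹ * (1 - I • A⁻¹))) :
    I * (1 + w) / (1 - w) ∈ spectrum ℂ A := by
  have hA' : A⁻¹ * A = 1 := nonsing_inv_mul _ ((isUnit_iff_isUnit_det A).1 hA)
  have hB' : (1 + I • A⁻¹)⁻¹ * (1 + I • A⁻¹) = 1 :=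
    nonsing_inv_mul _ ((isUnit_iff_isUnit_det _).1 hB)
  have hfactor : w • 1 - (1 + I • A⁻¹)⁻¹ * (1 - I • A⁻¹) =
      (1 + I • A⁻¹)⁻¹ * A⁻¹ * ((w - 1) • A + ((w + 1) * I) • 1) := by
    calc _ = (1 + I • A⁻¹)⁻¹ * (w • (1 + I • A⁻¹) - (1 - I • A⁻¹)) := by
          rw [mul_sub _ (w • _), Matrix.mul_smul, hB']
      _ = (1 + I • A⁻¹)⁻¹ * (A⁻¹ * ((w - 1) • A + ((w + 1) * I) • 1)) := by
          congr 1
          rw [mul_add A⁻¹, Matrix.mul_smul, Matrix.mul_smul, mul_one, hA']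
          module
      _ = _ := (Matrix.mul_assoc _ _ _).symm
  rw [spectrum.mem_iff, Algebra.algebraMap_eq_smul_one, hfactor] at hw
  have hunit : IsUnit ((1 + I • A⁻¹)⁻¹ * A⁻¹) :=
    (isUnit_nonsing_inv_iff.2 hB).mul (isUnit_nonsing_inv_iff.2 hA)
  have hw1 : (1 : ℂ) - w ≠ 0 := by
    rw [sub_ne_zero]
    rintro rfl
    refine hw (hunit.mul ?_)
    rw [sub_self, zero_smul, zero_add]
    exact isUnit_one.smul (Units.mk0 ((1 + 1) * I) (by simp))
  rw [spectrum.mem_iff, Algebra.algebraMap_eq_smul_one]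
  intro hμ
  refine hw (hunit.mul ?_)
  have : (w - 1) • A + ((w + 1) * I) • (1 : Matrix n n ℂ) =
      (1 - w) • ((I * (1 + w) / (1 - w)) • 1 - A) := by
    rw [smul_sub, smul_smul, mul_div_cancel₀ _ hw1]
    module
  rw [this]
  exact hμ.smul (Units.mk0 _ hw1)

theorem tendsto_cayley_pow_atTop_nhds_zero (hσ : ∀ μ ∈ spectrum ℂ A, 0 < μ.im) :
    Tendsto (((1 + I • A⁻¹)⁻¹ * (1 - I • A⁻¹)) ^ ·) atTop (𝓝 0) :=
  tendsto_pow_atTop_nhds_zero_of_forall_norm_lt_one fun _ hw =>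
    Complex.norm_lt_one_of_im_pos_cayley <| hσ _ <| mem_spectrum_of_mem_spectrum_cayley
      (isUnit_of_forall_mem_spectrum_im_pos hσ) (isUnit_one_add_I_smul_inv hσ) hw

end UpperHalfPlaneSpectrum

end Matrix

theorem stmt12_general (n m₁ m₂ : ℕ)
    (A : Matrix (Fin n) (Fin n) ℂ)
    (hspec : ∀ μ ∈ spectrum ℂ A, 0 < μ.im)
    (hi : Complex.I ∉ spectrum ℂ A)
    (θ₁ : Matrix (Fin n) (Fin m₁) ℂ) (θ₂ : Matrix (Fin n) (Fin m₂) ℂ)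
    (J : Matrix (Fin m₁ ⊕ Fin m₂) (Fin m₁ ⊕ Fin m₂) ℂ)
    (hJ : J = Matrix.fromBlocks 1 0 0 (-1))
    (P : ℕ → Matrix (Fin n) (Fin m₁ ⊕ Fin m₂) ℂ)
    (hPdef : ∀ r, P r = Matrix.fromCols ((1 + Complex.I • A⁻¹) ^ r * θ₁)
      ((1 - Complex.I • A⁻¹) ^ r * θ₂))
    (S : ℕ → Matrix (Fin n) (Fin n) ℂ)
    (R Q : ℕ → Matrix (Fin n) (Fin n) ℂ)
    (hR : ∀ r, R r = ((1 + Complex.I • A⁻¹) ^ r)⁻¹ * S r *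
      (((1 - Complex.I • Aᴴ⁻¹) ^ r)⁻¹))
    (hQ : ∀ r, Q r = ((1 - Complex.I • A⁻¹) ^ r)⁻¹ * S r *
      (((1 + Complex.I • Aᴴ⁻¹) ^ r)⁻¹))
    (κR κQ : Matrix (Fin n) (Fin n) ℂ)
    (hκR : Filter.Tendsto (fun k => (R k)⁻¹) Filter.atTop (nhds κR))
    (hκQ : Filter.Tendsto (fun k => (Q k)⁻¹) Filter.atTop (nhds κQ))
    (z : ℂ) (hz : z ≠ 0) :
    Filter.Tendsto
      (fun k : ℕ =>
        1 - Complex.I • (J * (P k)ᴴ * (S k)⁻¹ * (A - (-1 / z) • 1)⁻¹ * P k))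
      Filter.atTop
      (nhds (Matrix.fromBlocks
        (1 - (Complex.I * z) • (θ₁ᴴ * κR * (1 + z • A)⁻¹ * θ₁)) 0 0
        (1 + (Complex.I * z) • (θ₂ᴴ * κQ * (1 + z • A)⁻¹ * θ₂)))) := by
  set B := 1 + I • A⁻¹
  set C := 1 - I • A⁻¹
  set M := (A - (-1 / z) • 1)⁻¹
  have hB : IsUnit B := isUnit_one_add_I_smul_inv hspec
  have hC : IsUnit C := isUnit_one_sub_smul_inv (isUnit_of_forall_mem_spectrum_im_pos hspec) hi
  have hMA := commute_inv_sub_smul_one_inv A (-1 / z)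
  have hMB : Commute M B := (Commute.one_right M).add_right (hMA.smul_right I)
  have hMC : Commute M C := (Commute.one_right M).sub_right (hMA.smul_right I)
  have hBC : Commute B C :=
    (Commute.one_left C).add_left ((Commute.one_right _).sub_right (.refl _))
  have hRinv : ∀ k, (R k)⁻¹ = (B ^ k)ᴴ * (S k)⁻¹ * B ^ k := fun k => by
    rw [hR, ← conjTranspose_one_add_I_smul_inv, ← conjTranspose_pow,
      inv_inv_mul_mul_conjTranspose_inv (hB.pow k)]
  have hQinv : ∀ k, (Q k)⁻¹ = (C ^ k)ᴴ * (S k)⁻¹ * C ^ k := fun k => by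
    rw [hQ, ← conjTranspose_one_sub_I_smul_inv, ← conjTranspose_pow,
      inv_inv_mul_mul_conjTranspose_inv (hC.pow k)]
  have hw : ∀ k, fromBlocks (1 - I • (θ₁ᴴ * (R k)⁻¹ * M * θ₁))
      (-(I • (θ₁ᴴ * (R k)⁻¹ * M * ((B⁻¹ * C) ^ k * θ₂))))
      (I • (θ₂ᴴ * ((B⁻¹ * C) ^ k)ᴴ * (R k)⁻¹ * M * θ₁))
      (1 + I • (θ₂ᴴ * (Q k)⁻¹ * M * θ₂)) = 1 - I • (J * (P k)ᴴ * (S k)⁻¹ * M * P k) := fun k => by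
    rw [hPdef, hJ, one_sub_smul_fromBlocks_mul_conjTranspose_fromCols_of_commute (hB.pow k)
      (hMB.pow_right k) (hMC.pow_right k), hRinv, hQinv, hBC.matrix_inv_left.mul_pow, inv_pow']
  refine Tendsto.congr hw ?_
  convert tendsto_fromBlocks_of_tendsto hκR hκQ (tendsto_cayley_pow_atTop_nhds_zero hspec)
    I θ₁ θ₂ M using 3 <;>
  simp [M, inv_sub_neg_one_div_smul_one A hz, smul_smul]

/-- Convergence (R5)-(R6) of the transfer matrices w_A(k, -1/z) to
diag(χ₁(z), χ₂(z)). -/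
theorem stmt12 (n m₁ m₂ : ℕ) (hn : 0 < n)
    (A : Matrix (Fin n) (Fin n) ℂ) (hA : IsUnit A.det)
    (hspec : ∀ μ ∈ spectrum ℂ A, 0 < μ.im)
    (hi : Complex.I ∉ spectrum ℂ A)
    (θ₁ : Matrix (Fin n) (Fin m₁) ℂ) (θ₂ : Matrix (Fin n) (Fin m₂) ℂ)
    (J : Matrix (Fin m₁ ⊕ Fin m₂) (Fin m₁ ⊕ Fin m₂) ℂ)
    (hJ : J = Matrix.fromBlocks 1 0 0 (-1))
    (P : ℕ → Matrix (Fin n) (Fin m₁ ⊕ Fin m₂) ℂ)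
    (hPdef : ∀ r, P r = Matrix.fromCols ((1 + Complex.I • A⁻¹) ^ r * θ₁)
      ((1 - Complex.I • A⁻¹) ^ r * θ₂))
    (S : ℕ → Matrix (Fin n) (Fin n) ℂ) (hSpos : ∀ r, (S r).PosDef)
    (R Q : ℕ → Matrix (Fin n) (Fin n) ℂ)
    (hR : ∀ r, R r = ((1 + Complex.I • A⁻¹) ^ r)⁻¹ * S r *
      (((1 - Complex.I • Aᴴ⁻¹) ^ r)⁻¹))
    (hQ : ∀ r, Q r = ((1 - Complex.I • A⁻¹) ^ r)⁻¹ * S r *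
      (((1 + Complex.I • Aᴴ⁻¹) ^ r)⁻¹))
    (κR κQ : Matrix (Fin n) (Fin n) ℂ)
    (hκR : Filter.Tendsto (fun k => (R k)⁻¹) Filter.atTop (nhds κR))
    (hκQ : Filter.Tendsto (fun k => (Q k)⁻¹) Filter.atTop (nhds κQ))
    (hκRpos : κR.PosSemidef) (hκQpos : κQ.PosSemidef)
    (z : ℂ) (hz : z ≠ 0) (hzA : IsUnit (1 + z • A).det) :
    Filter.Tendsto
      (fun k : ℕ =>
        1 - Complex.I • (J * (P k)ᴴ * (S k)⁻¹ * (A - (-1 / z) • 1)⁻¹ * P k))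
      Filter.atTop
      (nhds (Matrix.fromBlocks
        (1 - (Complex.I * z) • (θ₁ᴴ * κR * (1 + z • A)⁻¹ * θ₁)) 0 0
        (1 + (Complex.I * z) • (θ₂ᴴ * κQ * (1 + z • A)⁻¹ * θ₂)))) :=
  stmt12_general n m₁ m₂ A hspec hi θ₁ θ₂ J hJ P hPdef S R Q hR hQ κR κQ hκR hκQ z hz
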